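/- arXiv:1802.03744 — 3 statements merged into one kernel-verified Lean document; each statement's English description precedes it below -/
import Mathlib

section
/- For any clock λ, the object of clocks 𝒞 is isomorphic, as an object of Set^𝕋, to the colimit of the ℕ-indexed diagram n ↦ y({λ}, n), whose connecting morphisms y({λ}, n) → y({λ}, n+1) are the images under the co-Yoneda embedding of the 𝕋-morphisms ({λ}, n+1) → ({λ}, n) given by the identity function on {λ}. -/
open CategoryTheory CategoryTheory.Limits Opposite

/-- A time object: a finite set of clocks together with the number of ticks left on each. -/
structure TimeObj (C : Type) where
  E : Finset C
  d : {x // x ∈ E} → ℕ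

/-- A morphism of time objects. -/
structure TimeHom {C : Type} (A B : TimeObj C) where
  toFun : {x // x ∈ A.E} → {x // x ∈ B.E}
  le : ∀ x, B.d (toFun x) ≤ A.d x

theorem TimeHom.ext' {C : Type} {A B : TimeObj C} {f g : TimeHom A B}
    (h : f.toFun = g.toFun) : f = g := by
  cases f; cases g; cases h; rfl

/-- The category 𝕋 of time objects. -/
instance TimeCat (C : Type) : Category (TimeObj C) where
  Hom := TimeHom
  id _ := ⟨fun x => x, fun _ => le_rfl⟩
  comp f g := ⟨TimeHom.toFun g ∘ TimeHom.toFun f,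
    fun x => le_trans (TimeHom.le g _) (TimeHom.le f _)⟩
  id_comp _ := rfl
  comp_id _ := rfl
  assoc _ _ _ := rfl

/-- The time object `({λ}, n)`. -/
def single (C : Type) (l : C) (n : ℕ) : TimeObj C :=
  ⟨{l}, fun _ => n⟩

/-- The object of clocks 𝒞 in `Set^𝕋`. -/
def Clocks (C : Type) : TimeObj C ⥤ Type where
  obj A := {x // x ∈ A.E}
  map f := TypeCat.ofHom (TimeHom.toFun f)
  map_id _ := rfl
  map_comp _ _ := rfl

/-- The 𝕋-morphism `({λ}, n+1) ⟶ ({λ}, n)` given by the identity function on `{λ}`. -/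
def stepHom (C : Type) (l : C) (n : ℕ) : single C l (n + 1) ⟶ single C l n :=
  ⟨fun x => x, fun _ => Nat.le_succ n⟩

/-- The ℕ-indexed diagram `n ↦ y({λ}, n)` whose connecting maps are the images under
the co-Yoneda embedding of the morphisms `({λ}, n+1) ⟶ ({λ}, n)` given by the
identity function on `{λ}`. -/
noncomputable def clockDiagram (C : Type) (l : C) : ℕ ⥤ (TimeObj C ⥤ Type) :=
  CategoryTheory.Functor.ofSequence
    (fun n => coyoneda.map (Quiver.Hom.op (stepHom C l n)))

/-
A morphism out of `({λ}, n)` is just a clock `x` with `δ x ≤ n`, and the connecting maps of the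
diagram leave that clock unchanged. Evaluating at `λ` therefore gives a cocone with apex `𝒞`, and
at each time object `(ℰ, δ)` it is a filtered colimit of sets: every clock `x` is already hit at
stage `δ x`, and two morphisms out of the same `({λ}, n)` with the same value at `λ` are equal.
-/

section Clocks

variable {C : Type} (l : C)

lemma single_hom_ext {A : TimeObj C} {n : ℕ} {f g : single C l n ⟶ A}
    (h : f.toFun ⟨l, Finset.mem_singleton_self l⟩ = g.toFun ⟨l, Finset.mem_singleton_self l⟩) :
    f = g := by
  refine TimeHom.ext' (funext fun ⟨x, hx⟩ => ?_)
  obtain rfl : x = l := Finset.mem_singleton.mp hx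
  exact h

def singleHomOfLE {A : TimeObj C} (x : {x // x ∈ A.E}) {n : ℕ} (h : A.d x ≤ n) :
    single C l n ⟶ A :=
  ⟨fun _ => x, fun _ => h⟩

/-- The Yoneda element `λ ∈ 𝒞({λ}, n)`. -/
def evalClock (n : ℕ) : coyoneda.obj (op (single C l n)) ⟶ Clocks C where
  app A := TypeCat.ofHom fun f => f.toFun ⟨l, Finset.mem_singleton_self l⟩

lemma clockDiagram_map_succ (n : ℕ) :
    (clockDiagram C l).map (homOfLE (n.le_add_right 1)) = coyoneda.map (stepHom C l n).op :=
  Functor.ofSequence_map_homOfLE_succ _ n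

noncomputable def clockCocone : Cocone (clockDiagram C l) where
  pt := Clocks C
  ι := NatTrans.ofSequence (evalClock l) fun n => by
    rw [clockDiagram_map_succ]
    rfl

noncomputable def clockCoconeIsColimit : IsColimit (clockCocone l) :=
  evaluationJointlyReflectsColimits _ fun A =>
    Types.FilteredColimit.isColimitOf' _ _
      (fun x => ⟨A.d x, singleHomOfLE l x le_rfl, rfl⟩)
      (fun n f g h => ⟨n, 𝟙 n, by rw [single_hom_ext l h]⟩)

end Clocks

theorem statement_1_general (C : Type) (l : C) :
    Nonempty (Limits.colimit (clockDiagram C l) ≅ Clocks C) :=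
  ⟨colimit.isoColimitCocone ⟨clockCocone l, clockCoconeIsColimit l⟩⟩

/-- The object of clocks `𝒞` is isomorphic to the colimit of the diagram
`n ↦ y({λ}, n)`. -/
theorem statement_1 (C : Type) [Countable C] [Infinite C] (l : C) :
    Nonempty (Limits.colimit (clockDiagram C l) ≅ Clocks C) :=
  statement_1_general C l
end

section
/- Let A be an object of Set^𝕋, λ a clock and n ∈ ℕ. For every time object (ℰ, δ) and every clock λ* ∉ ℰ, there is a bijection between the value of the exponential presheaf A^{y({λ}, n)} at (ℰ, δ) and the set A(ℰ ∪ {λ*}, δ[λ* ↦ n]); moreover, under this bijection the component at (ℰ, δ) of the canonical morphism c_A : A → A^{y({λ}, n)} (the exponential transpose of the projection A × y({λ}, n) → A) is equal to the map A(ι), where ι : (ℰ, δ) → (ℰ ∪ {λ*}, δ[λ* ↦ n]) is the inclusion. -/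
open CategoryTheory CategoryTheory.Limits Opposite

open MonoidalCategory

/-- In a category with (chosen) finite products, a morphism `p : A ⟶ B` is
*orthogonal* to an object `X` if every commuting square whose left edge is a
projection `Y ⊗ X ⟶ Y` and whose right edge is `p` has a unique diagonal filler. -/
def OrthogonalTo {𝒞 : Type u} [Category.{v} 𝒞] [CartesianMonoidalCategory 𝒞]
    {A B : 𝒞} (p : A ⟶ B) (X : 𝒞) : Prop :=
  ∀ (Y : 𝒞) (f : Y ⊗ X ⟶ A) (g : Y ⟶ B),
    f ≫ p = SemiCartesianMonoidalCategory.fst Y X ≫ g →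
      ∃! h : Y ⟶ A, SemiCartesianMonoidalCategory.fst Y X ≫ h = f ∧ h ≫ p = g

/-- A morphism of presheaves on 𝕋 is invariant under clock introduction if it is
orthogonal to every representable `y({λ}, n)`. -/
def InvariantUnderClockIntro {C : Type} {A B : TimeObj C ⥤ Type} (p : A ⟶ B) : Prop :=
  ∀ (l : C) (n : ℕ), OrthogonalTo p (coyoneda.obj (op (single C l n)))

/-- The time object `(ℰ ∪ {λ}, δ[λ ↦ n])`. -/
def TimeObj.extend {C : Type} [DecidableEq C] (A : TimeObj C) (l : C) (n : ℕ) :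
    TimeObj C where
  E := insert l A.E
  d x := if h : x.1 ∈ A.E then A.d ⟨x.1, h⟩ else n

/-- The inclusion `(ℰ, δ) ⟶ (ℰ ∪ {λ}, δ[λ ↦ n])`. -/
def inclExtend {C : Type} [DecidableEq C] (A : TimeObj C) (l : C) (n : ℕ) :
    A ⟶ A.extend l n :=
  ⟨fun x => ⟨x.1, Finset.mem_insert_of_mem x.2⟩, fun x => by
    dsimp [TimeObj.extend]
    rw [if_pos x.2]⟩

/-
For `λ* ∉ ℰ`, the time object `(ℰ ∪ {λ*}, δ[λ* ↦ n])` is the coproduct of `({λ}, n)` and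
`(ℰ, δ)` in 𝕋, so the co-Yoneda embedding turns it into a product:
`y(ℰ ∪ {λ*}, δ[λ* ↦ n]) ≅ y({λ}, n) × y(ℰ, δ)`. Hence, by Yoneda and the exponential adjunction,
`A^{y({λ}, n)}(ℰ, δ) ≅ Hom(y({λ}, n) × y(ℰ, δ), A) ≅ Hom(y(ℰ ∪ {λ*}, δ[λ* ↦ n]), A) ≅
A(ℰ ∪ {λ*}, δ[λ* ↦ n])`. Transposing the projection `y({λ}, n) × A ⟶ A` and tracing an element
through these bijections gives precomposition with the second coproduct injection, i.e. `A(ι)`.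
-/

section Exponential

variable {D : Type} [SmallCategory D] {S : D ⥤ Type} {X Z : D}

lemma coyonedaEquiv_symm_app_apply_eq_comp {F G : D ⥤ Type} (N : F ⟶ G) (a : F.obj X) :
    coyonedaEquiv.symm (N.app X a) = coyonedaEquiv.symm a ≫ N :=
  coyonedaEquiv.injective <| by
    rw [coyonedaEquiv_comp, Equiv.apply_symm_apply, Equiv.apply_symm_apply]

def ihomObjEquivOfIso (i : coyoneda.obj (op Z) ≅ S ⊗ coyoneda.obj (op X)) (A : D ⥤ Type) :
    ((ihom S).obj A).obj X ≃ A.obj Z :=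
  coyonedaEquiv.symm.trans <|
    (((ihom.adjunction S).homEquiv _ A).symm.trans (i.symm.homCongr (Iso.refl A))).trans
      coyonedaEquiv

lemma ihomObjEquivOfIso_curry_snd (i : coyoneda.obj (op Z) ≅ S ⊗ coyoneda.obj (op X))
    {ι : X ⟶ Z} (hι : i.hom ≫ SemiCartesianMonoidalCategory.snd _ _ = coyoneda.map ι.op)
    (A : D ⥤ Type) (a : A.obj X) :
    ihomObjEquivOfIso i A ((MonoidalClosed.curry (SemiCartesianMonoidalCategory.snd S A)).app X a)
      = A.map ι a := by
  simp only [ihomObjEquivOfIso, Equiv.trans_apply, coyonedaEquiv_symm_app_apply_eq_comp,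
    MonoidalClosed.homEquiv_symm_apply_eq, MonoidalClosed.uncurry_natural_left,
    MonoidalClosed.uncurry_curry, CartesianMonoidalCategory.whiskerLeft_snd, Iso.homCongr_apply,
    Iso.symm_inv, Iso.refl_hom, Category.comp_id, reassoc_of% hι, coyonedaEquiv_comp,
    coyonedaEquiv_coyoneda_map]
  rfl

end Exponential

section Extend

variable {C : Type} [DecidableEq C] {Eδ : TimeObj C} {l l' : C} {n : ℕ}

def singleToExtend (hl' : l' ∉ Eδ.E) : single C l n ⟶ Eδ.extend l' n :=
  ⟨fun _ => ⟨l', Finset.mem_insert_self _ _⟩, fun _ => by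
    simp [TimeObj.extend, single, hl']⟩

def extendDesc {X : TimeObj C} (s : single C l n ⟶ X) (k : Eδ ⟶ X) :
    Eδ.extend l' n ⟶ X where
  toFun x :=
    if h : x.1 ∈ Eδ.E then k.toFun ⟨x.1, h⟩ else s.toFun ⟨l, Finset.mem_singleton_self l⟩
  le x := by
    dsimp [TimeObj.extend]
    split_ifs
    · exact TimeHom.le k _
    · exact TimeHom.le s _

def extendHomEquiv (hl' : l' ∉ Eδ.E) (X : TimeObj C) :
    (Eδ.extend l' n ⟶ X) ≃ (single C l n ⟶ X) × (Eδ ⟶ X) where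
  toFun h := (singleToExtend hl' ≫ h, inclExtend Eδ l' n ≫ h)
  invFun p := extendDesc p.1 p.2
  left_inv h := by
    refine TimeHom.ext' (funext fun x => ?_)
    show (extendDesc _ _).toFun x = h.toFun x
    by_cases hx : x.1 ∈ Eδ.E
    · exact dif_pos hx
    · obtain rfl : x = ⟨l', Finset.mem_insert_self _ _⟩ :=
        Subtype.ext ((Finset.mem_insert.1 x.2).resolve_right hx)
      exact dif_neg hl'
  right_inv p := by
    obtain ⟨s, k⟩ := p
    refine Prod.ext (TimeHom.ext' (funext fun y => ?_)) (TimeHom.ext' (funext fun x => ?_))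
    · show (extendDesc s k).toFun _ = s.toFun y
      obtain ⟨y, hy⟩ := y
      obtain rfl := Finset.mem_singleton.1 hy
      exact dif_neg hl'
    · exact dif_pos x.2

def extendIso (hl' : l' ∉ Eδ.E) :
    coyoneda.obj (op (Eδ.extend l' n)) ≅
      coyoneda.obj (op (single C l n)) ⊗ coyoneda.obj (op Eδ) :=
  NatIso.ofComponents (fun X => (extendHomEquiv hl' X).toIso) fun _ => rfl

lemma extendIso_hom_snd (hl' : l' ∉ Eδ.E) :
    (extendIso (l := l) hl').hom ≫ SemiCartesianMonoidalCategory.snd _ _ =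
      coyoneda.map (inclExtend Eδ l' n).op :=
  rfl

end Extend

theorem statement_5_general (C : Type) [DecidableEq C]
    (A : TimeObj C ⥤ Type) (l : C) (n : ℕ) (Eδ : TimeObj C) (l' : C)
    (hl' : l' ∉ Eδ.E) :
    ∃ e : ((ihom (coyoneda.obj (op (single C l n)))).obj A).obj Eδ ≃
        A.obj (Eδ.extend l' n),
      ∀ a : A.obj Eδ,
        e (((MonoidalClosed.curry
            (SemiCartesianMonoidalCategory.snd (coyoneda.obj (op (single C l n))) A)).app Eδ) a)
          = A.map (inclExtend Eδ l' n) a :=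
  ⟨ihomObjEquivOfIso (extendIso hl') A,
    ihomObjEquivOfIso_curry_snd (extendIso hl') (extendIso_hom_snd hl') A⟩

/-- For any presheaf `A` on 𝕋, a clock `λ` and `n : ℕ`, the value of the exponential
`A^{y({λ}, n)}` at `(ℰ, δ)` is in bijection with `A(ℰ ∪ {λ*}, δ[λ* ↦ n])` for any
`λ* ∉ ℰ`, and under this bijection the component at `(ℰ, δ)` of the canonical map
`c_A : A ⟶ A^{y({λ}, n)}` (the exponential transpose of the projection) is the map
`A(ι)` induced by the inclusion `ι : (ℰ, δ) ⟶ (ℰ ∪ {λ*}, δ[λ* ↦ n])`. -/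
theorem statement_5 (C : Type) [Countable C] [Infinite C] [DecidableEq C]
    (A : TimeObj C ⥤ Type) (l : C) (n : ℕ) (Eδ : TimeObj C) (l' : C)
    (hl' : l' ∉ Eδ.E) :
    ∃ e : ((ihom (coyoneda.obj (op (single C l n)))).obj A).obj Eδ ≃
        A.obj (Eδ.extend l' n),
      ∀ a : A.obj Eδ,
        e (((MonoidalClosed.curry
            (SemiCartesianMonoidalCategory.snd (coyoneda.obj (op (single C l n))) A)).app Eδ) a)
          = A.map (inclExtend Eδ l' n) a :=
  statement_5_general C A l n Eδ l' hl'
end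

section
/- Let Δ be a finite set of clocks. The full subcategory of the slice category Set^𝕋/𝒞^Δ spanned by those objects whose structure morphism into 𝒞^Δ is invariant under clock introduction is equivalent to GR(Δ), the category of presheaves on the poset P(Δ). -/
open CategoryTheory CategoryTheory.Limits Opposite

open MonoidalCategory

/-- The `Δ`-fold power `𝒞^Δ` of the object of clocks. -/
def ClocksPow (C : Type) (Δ : Finset C) : TimeObj C ⥤ Type where
  obj A := {k // k ∈ Δ} → {x // x ∈ A.E}
  map f := TypeCat.ofHom (fun g => TimeHom.toFun f ∘ g)
  map_id _ := rfl
  map_comp _ _ := rfl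

/-- An element of the poset `P(Δ)`: an equivalence relation `E` on `Δ` together
with a function `d : Δ → ℕ` respecting `E`. -/
structure PObj (C : Type) (Δ : Finset C) where
  E : Setoid {k // k ∈ Δ}
  d : {k // k ∈ Δ} → ℕ
  resp : ∀ a b, E.r a b → d a = d b

/-- The order on `P(Δ)`: `(E, d) ≤ (E', d')` iff `E' ⊆ E` (as subsets of `Δ × Δ`)
and `d ≤ d'` pointwise. -/
instance PObj.instPreorder (C : Type) (Δ : Finset C) : Preorder (PObj C Δ) where
  le x y := (∀ a b, y.E.r a b → x.E.r a b) ∧ ∀ k, x.d k ≤ y.d k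
  le_refl _ := ⟨fun _ _ h => h, fun _ => le_rfl⟩
  le_trans _ _ _ h₁ h₂ :=
    ⟨fun a b h => h₁.1 a b (h₂.1 a b h), fun k => (h₁.2 k).trans (h₂.2 k)⟩

/-!
A map `p : X ⟶ 𝒞^Δ` is invariant under clock introduction iff every embedding `σ : A ⟶ B`
of time objects (injective and preserving `δ`) induces bijections from the fibre of `p` over
`r` to the fibre over `σ ∘ r`. Orthogonality to `y({λ}, n)` is exactly this statement for
the introduction of one fresh clock `λ`, and every embedding is such introductions followed
by an isomorphism; conversely, as there are infinitely many clocks, any square against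
`y({λ}, n)` is solved at `ℰ` by passing to `ℰ` extended by a fresh clock.

The fibre over `ρ ∈ 𝒞^Δ(ℰ)` is then determined by the element of `P(Δ)` that `ρ` induces
(its kernel and `δ ∘ ρ`), and is the fibre over the canonical map `Δ ⟶ ℰ_u` onto a
realization of that element `u`. So an invariant `X` is the total space of the presheaf
`u ↦ fibre over Δ ⟶ ℰ_u` on `P(Δ)`, and conversely the total space of any `Y ∈ GR(Δ)` is
invariant, with `Y` and its morphisms read off from it in the same way.
-/

noncomputable section

namespace TimeHom

variable {C : Type} {A B B' : TimeObj C}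

@[simp] lemma comp_toFun (σ : A ⟶ B) (τ : B ⟶ B') : (σ ≫ τ).toFun = τ.toFun ∘ σ.toFun := rfl

/-- Morphisms that only rename clocks and introduce new ones. -/
structure IsEmbedding (σ : A ⟶ B) : Prop where
  injective : Function.Injective σ.toFun
  d_eq : ∀ x, B.d (σ.toFun x) = A.d x

lemma isIso_of_isEmbedding {σ : A ⟶ B} (hσ : σ.IsEmbedding)
    (hs : Function.Surjective σ.toFun) : IsIso σ := by
  let e := Equiv.ofBijective σ.toFun ⟨hσ.injective, hs⟩
  refine ⟨⟨⟨e.symm, fun y => ?_⟩, ext' (funext e.symm_apply_apply),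
    ext' (funext e.apply_symm_apply)⟩⟩
  have := hσ.d_eq (e.symm y)
  rw [show σ.toFun (e.symm y) = y from e.apply_symm_apply y] at this
  exact this.ge

end TimeHom

namespace TimeObj

variable {C : Type} [DecidableEq C] {A B : TimeObj C} {l l' : C} {n : ℕ}

lemma isEmbedding_inclExtend (A : TimeObj C) (l : C) (n : ℕ) :
    (inclExtend A l n).IsEmbedding :=
  ⟨fun _ _ h => Subtype.ext (by injection h), fun x => dif_pos x.2⟩

def freshIncl (hl : l ∉ A.E) : single C l' n ⟶ A.extend l n :=
  ⟨fun _ => ⟨l, Finset.mem_insert_self _ _⟩, fun _ => by simp [TimeObj.extend, single, hl]⟩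

/-- `A.extend l n` is the coproduct of `A` and `({l'}, n)` when `l` is fresh;
this is the copairing. -/
def extendDesc (u : A ⟶ B) (w : single C l' n ⟶ B) : A.extend l n ⟶ B :=
  ⟨fun x => if h : x.1 ∈ A.E then u.toFun ⟨x.1, h⟩ else w.toFun ⟨l', Finset.mem_singleton_self l'⟩,
   fun x => by
     by_cases h : x.1 ∈ A.E
     · simpa [TimeObj.extend, h] using TimeHom.le u ⟨x.1, h⟩
     · simpa [TimeObj.extend, single, h] using TimeHom.le w ⟨l', Finset.mem_singleton_self l'⟩⟩

@[simp] lemma inclExtend_extendDesc (u : A ⟶ B) (w : single C l' n ⟶ B) :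
    inclExtend A l n ≫ extendDesc u w = u :=
  TimeHom.ext' (funext fun x => dif_pos x.2)

@[simp] lemma freshIncl_extendDesc (hl : l ∉ A.E) (u : A ⟶ B) (w : single C l' n ⟶ B) :
    freshIncl hl ≫ extendDesc u w = w :=
  TimeHom.ext' (funext fun ⟨x, hx⟩ => by
    obtain rfl := Finset.mem_singleton.mp hx
    exact dif_neg hl)

lemma extendDesc_comp {B' : TimeObj C} (u : A ⟶ B) (w : single C l' n ⟶ B) (τ : B ⟶ B') :
    extendDesc (l := l) u w ≫ τ = extendDesc (u ≫ τ) (w ≫ τ) :=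
  TimeHom.ext' (funext fun x => by
    by_cases hx : x.1 ∈ A.E <;> simp [extendDesc, hx])

@[simp] lemma extendDesc_inclExtend_freshIncl (hl : l ∉ A.E) :
    extendDesc (inclExtend A l n) (freshIncl (l' := l) hl) = 𝟙 (A.extend l n) :=
  TimeHom.ext' (funext fun x => by
    by_cases hx : x.1 ∈ A.E
    · exact dif_pos hx
    · have hxl : x.1 = l := (Finset.mem_insert.mp x.2).resolve_right hx
      exact (dif_neg hx).trans (Subtype.ext hxl.symm))

def erase (B : TimeObj C) (b : {x // x ∈ B.E}) : TimeObj C :=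
  ⟨B.E.erase b.1, fun x => B.d ⟨x.1, Finset.mem_of_mem_erase x.2⟩⟩

lemma mem_of_mem_eraseExtend (B : TimeObj C) (b : {x // x ∈ B.E}) {n : ℕ}
    (x : {x // x ∈ ((B.erase b).extend b.1 n).E}) : x.1 ∈ B.E := by
  have h : x.1 ∈ insert b.1 (B.E.erase b.1) := x.2
  rwa [Finset.insert_erase b.2] at h

lemma d_eraseExtend (B : TimeObj C) (b : {x // x ∈ B.E})
    (x : {x // x ∈ ((B.erase b).extend b.1 (B.d b)).E}) :
    ((B.erase b).extend b.1 (B.d b)).d x = B.d ⟨x.1, mem_of_mem_eraseExtend B b x⟩ := by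
  by_cases hx : x.1 ∈ (B.erase b).E
  · exact dif_pos hx
  · have hxb : x.1 = b.1 := (Finset.mem_insert.mp x.2).resolve_right hx
    exact (dif_neg hx).trans (congrArg B.d (Subtype.ext hxb.symm))

def eraseExtendHom (B : TimeObj C) (b : {x // x ∈ B.E}) : (B.erase b).extend b.1 (B.d b) ⟶ B :=
  ⟨fun x => ⟨x.1, mem_of_mem_eraseExtend B b x⟩, fun x => (d_eraseExtend B b x).ge⟩

lemma isEmbedding_eraseExtendHom (B : TimeObj C) (b : {x // x ∈ B.E}) :
    (B.eraseExtendHom b).IsEmbedding :=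
  ⟨fun _ _ h => Subtype.ext (by injection h), fun x => (d_eraseExtend B b x).symm⟩

lemma eraseExtendHom_surjective (B : TimeObj C) (b : {x // x ∈ B.E}) :
    Function.Surjective (B.eraseExtendHom b).toFun :=
  fun y => ⟨⟨y.1, by
    show y.1 ∈ insert b.1 (B.E.erase b.1)
    rw [Finset.insert_erase b.2]; exact y.2⟩, rfl⟩

lemma exists_factor_inclExtend {σ : A ⟶ B} (hσ : σ.IsEmbedding)
    (hs : ¬ Function.Surjective σ.toFun) :
    ∃ (B₀ : TimeObj C) (l : C) (_ : l ∉ B₀.E) (n : ℕ) (σ₀ : A ⟶ B₀) (e : B₀.extend l n ⟶ B),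
      σ₀.IsEmbedding ∧ IsIso e ∧ B₀.E.card < B.E.card ∧ σ = σ₀ ≫ inclExtend B₀ l n ≫ e := by
  obtain ⟨b, hb⟩ : ∃ b, ∀ x, σ.toFun x ≠ b := by simpa [Function.Surjective] using hs
  have hmem x : (σ.toFun x).1 ∈ (B.erase b).E :=
    Finset.mem_erase.mpr ⟨fun h => hb x (Subtype.ext h), (σ.toFun x).2⟩
  refine ⟨B.erase b, b.1, Finset.notMem_erase _ _, B.d b, ⟨fun x => ⟨_, hmem x⟩, TimeHom.le σ⟩,
    B.eraseExtendHom b, ⟨fun _ _ h => hσ.injective (Subtype.ext (by injection h)), hσ.d_eq⟩,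
    TimeHom.isIso_of_isEmbedding (isEmbedding_eraseExtendHom B b) (eraseExtendHom_surjective B b),
    Finset.card_erase_lt_of_mem b.2, rfl⟩

end TimeObj

section Fiber

variable {C : Type} {Δ : Finset C} {X : TimeObj C ⥤ Type} (p : X ⟶ ClocksPow C Δ)
  {A B : TimeObj C}

lemma app_map_eq_comp (σ : A ⟶ B) (x : X.obj A) : p.app B (X.map σ x) = σ.toFun ∘ p.app A x :=
  types_congr_hom (p.naturality σ) x

def fiberMap (σ : A ⟶ B) (r : (ClocksPow C Δ).obj A) :
    {x : X.obj A // p.app A x = r} → {y : X.obj B // p.app B y = σ.toFun ∘ r} :=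
  fun x => ⟨X.map σ x, by rw [app_map_eq_comp, x.2]⟩

lemma fiberMap_comp {B' : TimeObj C} (σ : A ⟶ B) (τ : B ⟶ B') (r : (ClocksPow C Δ).obj A) :
    fiberMap p (σ ≫ τ) r = fiberMap p τ (σ.toFun ∘ r) ∘ fiberMap p σ r := by
  funext x
  exact Subtype.ext (types_congr_hom (X.map_comp σ τ) x.1)

lemma fiberMap_comp_bijective {B' : TimeObj C} {σ : A ⟶ B} {τ : B ⟶ B'}
    {r : (ClocksPow C Δ).obj A} (hσ : Function.Bijective (fiberMap p σ r))
    (hτ : Function.Bijective (fiberMap p τ (σ.toFun ∘ r))) :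
    Function.Bijective (fiberMap p (σ ≫ τ) r) := by
  rw [fiberMap_comp]; exact hτ.comp hσ

lemma fiberMap_bijective_of_isIso (σ : A ⟶ B) [IsIso σ] (r : (ClocksPow C Δ).obj A) :
    Function.Bijective (fiberMap p σ r) := by
  have hX : Function.Bijective (X.map σ) := (isIso_iff_bijective _).mp inferInstance
  refine ⟨fun x y h => Subtype.ext (hX.1 (congrArg Subtype.val h)), fun y => ?_⟩
  refine ⟨⟨X.map (inv σ) y.1, ?_⟩, Subtype.ext ?_⟩
  · rw [app_map_eq_comp, y.2]
    show (σ ≫ inv σ).toFun ∘ r = r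
    rw [IsIso.hom_inv_id]; rfl
  · exact (types_congr_hom (X.map_comp (inv σ) σ).symm y.1).trans (by simp)

lemma coyonedaEquiv_symm_comp (x : X.obj A) :
    coyonedaEquiv.symm x ≫ p = coyonedaEquiv.symm (p.app A x) :=
  coyonedaEquiv.injective (by
    rw [coyonedaEquiv_comp, Equiv.apply_symm_apply, Equiv.apply_symm_apply])

end Fiber

section Orthogonality

open TimeObj

variable {C : Type} [DecidableEq C] {Δ : Finset C} {X : TimeObj C ⥤ Type}
  {p : X ⟶ ClocksPow C Δ} {A : TimeObj C} {l l' : C} {n : ℕ}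

/-- `xh` seen through `y A ⊗ y({l'}, n) ≅ y (A.extend l n)` (for fresh `l`). -/
def extendDescHom (xh : X.obj (A.extend l n)) :
    coyoneda.obj (op A) ⊗ coyoneda.obj (op (single C l' n)) ⟶ X where
  app _ := TypeCat.ofHom fun q => X.map (extendDesc q.1 q.2) xh
  naturality _ _ τ := ConcreteCategory.hom_ext _ _ fun q => by
    show X.map (extendDesc (q.1 ≫ τ) (q.2 ≫ τ)) xh = X.map τ (X.map (extendDesc q.1 q.2) xh)
    rw [← extendDesc_comp, X.map_comp]; rfl

lemma extendDescHom_comp (r : (ClocksPow C Δ).obj A) (xh : X.obj (A.extend l n))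
    (hxh : p.app _ xh = (inclExtend A l n).toFun ∘ r) :
    extendDescHom (l' := l') xh ≫ p =
      SemiCartesianMonoidalCategory.fst _ _ ≫ coyonedaEquiv.symm r := by
  ext B q
  show p.app B (X.map (extendDesc q.1 q.2) xh) = q.1.toFun ∘ r
  rw [app_map_eq_comp, hxh]
  funext a
  exact congrFun (congrArg TimeHom.toFun (inclExtend_extendDesc q.1 q.2)) (r a)

lemma fst_comp_coyonedaEquiv_symm (x : X.obj A) :
    SemiCartesianMonoidalCategory.fst _ _ ≫ coyonedaEquiv.symm x =
      extendDescHom (l' := l') (X.map (inclExtend A l n) x) := by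
  ext B q
  show X.map q.1 x = X.map (extendDesc q.1 q.2) (X.map (inclExtend A l n) x)
  rw [← types_comp_apply (X.map _) (X.map _), ← X.map_comp, inclExtend_extendDesc]

/-- Existence of diagonal fillers gives surjectivity, their uniqueness injectivity. -/
theorem fiberMap_inclExtend_bijective (hp : InvariantUnderClockIntro p) (hl : l ∉ A.E)
    (r : (ClocksPow C Δ).obj A) : Function.Bijective (fiberMap p (inclExtend A l n) r) := by
  constructor
  · rintro ⟨x, hx⟩ ⟨x', hx'⟩ h
    have hsq := extendDescHom_comp (l' := l) r _ ((fiberMap p (inclExtend A l n) r ⟨x, hx⟩).2)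
    obtain ⟨_, -, huniq⟩ := hp l n _ _ _ hsq
    have hfill (y : X.obj A) (hy : p.app A y = r) (he : X.map (inclExtend A l n) y =
        X.map (inclExtend A l n) x) := huniq (coyonedaEquiv.symm y)
      ⟨(fst_comp_coyonedaEquiv_symm y).trans (by rw [he]; rfl), by rw [coyonedaEquiv_symm_comp, hy]⟩
    have := (hfill x hx rfl).trans (hfill x' hx' (congrArg Subtype.val h).symm).symm
    exact Subtype.ext (coyonedaEquiv.symm.injective this)
  · rintro ⟨xh, hxh⟩
    obtain ⟨h, ⟨hf, hg⟩, -⟩ := hp l n _ _ _ (extendDescHom_comp (l' := l) r xh hxh)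
    refine ⟨⟨coyonedaEquiv h, by rw [← coyonedaEquiv_comp, hg, Equiv.apply_symm_apply]⟩,
      Subtype.ext ?_⟩
    calc X.map (inclExtend A l n) (coyonedaEquiv h)
        = (SemiCartesianMonoidalCategory.fst _ _ ≫ h).app _ (inclExtend A l n, freshIncl hl) :=
          map_coyonedaEquiv h _
      _ = X.map (extendDesc (inclExtend A l n) (freshIncl hl)) xh := by rw [hf]; rfl
      _ = xh := by rw [extendDesc_inclExtend_freshIncl, X.map_id]; rfl

end Orthogonality

def BijectiveOnFibers {C : Type} {Δ : Finset C} {X : TimeObj C ⥤ Type}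
    (p : X ⟶ ClocksPow C Δ) : Prop :=
  ∀ ⦃A B : TimeObj C⦄ (σ : A ⟶ B), σ.IsEmbedding → ∀ r, Function.Bijective (fiberMap p σ r)

open TimeObj in
/-- Every embedding is a composite of fresh clock introductions and an isomorphism. -/
theorem InvariantUnderClockIntro.bijectiveOnFibers {C : Type} {Δ : Finset C}
    {X : TimeObj C ⥤ Type} {p : X ⟶ ClocksPow C Δ} (hp : InvariantUnderClockIntro p) :
    BijectiveOnFibers p := by
  classical
  intro A B σ hσ r
  induction hB : B.E.card using Nat.strong_induction_on generalizing A B with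
  | _ N ih =>
  by_cases hs : Function.Surjective σ.toFun
  · have := TimeHom.isIso_of_isEmbedding hσ hs
    exact fiberMap_bijective_of_isIso p σ r
  obtain ⟨B₀, l, hl, n, σ₀, e, hσ₀, he, hcard, rfl⟩ := exists_factor_inclExtend hσ hs
  exact fiberMap_comp_bijective p (ih _ (hB ▸ hcard) σ₀ hσ₀ r rfl) <| fiberMap_comp_bijective p
    (fiberMap_inclExtend_bijective hp hl _) (fiberMap_bijective_of_isIso p e _)

lemma BijectiveOnFibers.eq_of_map_eq {C : Type} {Δ : Finset C} {X : TimeObj C ⥤ Type}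
    {p : X ⟶ ClocksPow C Δ} (hp : BijectiveOnFibers p) {A B : TimeObj C} {σ : A ⟶ B}
    (hσ : σ.IsEmbedding) {x x' : X.obj A} (happ : p.app A x = p.app A x')
    (hmap : X.map σ x = X.map σ x') : x = x' :=
  congrArg Subtype.val ((hp σ hσ _).1 (a₁ := ⟨x, happ⟩) (a₂ := ⟨x', rfl⟩) (Subtype.ext hmap))

section Lift

variable {C : Type} {Δ : Finset C} {X : TimeObj C ⥤ Type} {p : X ⟶ ClocksPow C Δ}
  (hp : BijectiveOnFibers p) {A B : TimeObj C} {σ : A ⟶ B} (hσ : σ.IsEmbedding)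
  (r : (ClocksPow C Δ).obj A) (y : X.obj B) (hy : p.app B y = σ.toFun ∘ r)

def BijectiveOnFibers.lift : X.obj A :=
  ((Equiv.ofBijective _ (hp σ hσ r)).symm ⟨y, hy⟩).1

lemma BijectiveOnFibers.app_lift : p.app A (hp.lift hσ r y hy) = r :=
  ((Equiv.ofBijective _ (hp σ hσ r)).symm ⟨y, hy⟩).2

lemma BijectiveOnFibers.map_lift : X.map σ (hp.lift hσ r y hy) = y :=
  congrArg Subtype.val ((Equiv.ofBijective _ (hp σ hσ r)).apply_symm_apply ⟨y, hy⟩)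

end Lift

lemma app_tensor_map {C : Type} {X Z : TimeObj C ⥤ Type} {W : TimeObj C ⥤ Type}
    (f : Z ⊗ W ⟶ X) {B B' : TimeObj C} (τ : B ⟶ B') (z : Z.obj B)
    (w : W.obj B) : f.app B' (Z.map τ z, W.map τ w) = X.map τ (f.app B (z, w)) :=
  types_congr_hom (f.naturality τ) (z, w)

namespace TimeObj

variable {C : Type} [Infinite C]

def fresh (B : TimeObj C) : C := (Infinite.exists_notMem_finset B.E).choose

lemma fresh_notMem (B : TimeObj C) : B.fresh ∉ B.E :=
  (Infinite.exists_notMem_finset B.E).choose_spec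

end TimeObj

section Converse

open TimeObj

variable {C : Type} [DecidableEq C] [Infinite C] {Δ : Finset C} {X : TimeObj C ⥤ Type}
  {p : X ⟶ ClocksPow C Δ} {l : C} {n : ℕ} {Z : TimeObj C ⥤ Type}
  (f : Z ⊗ coyoneda.obj (op (single C l n)) ⟶ X)

def freshValue (B : TimeObj C) (z : Z.obj B) : X.obj (B.extend B.fresh n) :=
  f.app _ (Z.map (inclExtend B B.fresh n) z, freshIncl B.fresh_notMem)

variable {f} (g : Z ⟶ ClocksPow C Δ)
  (hsq : f ≫ p = SemiCartesianMonoidalCategory.fst _ _ ≫ g)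
include hsq

lemma app_freshValue (B : TimeObj C) (z : Z.obj B) :
    p.app _ (freshValue f B z) = (inclExtend B B.fresh n).toFun ∘ g.app B z :=
  (types_congr_hom (congrArg (fun φ => φ.app (B.extend B.fresh n)) hsq) _).trans
    (types_congr_hom (g.naturality (inclExtend B B.fresh n)) z)

variable (hp : BijectiveOnFibers p)

/-- The diagonal filler, evaluated at `z`. -/
def freshLift (B : TimeObj C) (z : Z.obj B) : X.obj B :=
  hp.lift (isEmbedding_inclExtend B B.fresh n) (g.app B z) _ (app_freshValue g hsq B z)

lemma app_freshLift (B : TimeObj C) (z : Z.obj B) : p.app B (freshLift g hsq hp B z) = g.app B z :=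
  hp.app_lift _ _ _ _

lemma map_freshLift (B : TimeObj C) (z : Z.obj B) :
    X.map (inclExtend B B.fresh n) (freshLift g hsq hp B z) = freshValue f B z :=
  hp.map_lift _ _ _ _

lemma freshLift_naturality {B B' : TimeObj C} (σ : B ⟶ B') (z : Z.obj B) :
    freshLift g hsq hp B' (Z.map σ z) = X.map σ (freshLift g hsq hp B z) := by
  refine hp.eq_of_map_eq (isEmbedding_inclExtend B' B'.fresh n) ?_ ?_
  · rw [app_freshLift, app_map_eq_comp, app_map_eq_comp p, app_freshLift]
  set σ' : B.extend B.fresh n ⟶ B'.extend B'.fresh n :=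
    extendDesc (σ ≫ inclExtend B' B'.fresh n) (freshIncl B'.fresh_notMem)
  calc X.map (inclExtend B' B'.fresh n) (freshLift g hsq hp B' (Z.map σ z))
      = f.app _ (Z.map (inclExtend B B.fresh n ≫ σ') z, freshIncl B.fresh_notMem ≫ σ') := by
        rw [map_freshLift, inclExtend_extendDesc, freshIncl_extendDesc, Z.map_comp]; rfl
    _ = X.map (inclExtend B B.fresh n ≫ σ') (freshLift g hsq hp B z) := by
        rw [Z.map_comp, X.map_comp, types_comp_apply, types_comp_apply, map_freshLift]
        exact app_tensor_map f σ' _ _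
    _ = X.map (inclExtend B' B'.fresh n) (X.map σ (freshLift g hsq hp B z)) := by
        rw [inclExtend_extendDesc, X.map_comp]; rfl

lemma app_eq_freshLift {B : TimeObj C} (z : Z.obj B) (w : single C l n ⟶ B) :
    f.app B (z, w) = freshLift g hsq hp B z := by
  set κ : B.extend B.fresh n ⟶ B := extendDesc (𝟙 B) w
  calc f.app B (z, w)
      = f.app B (Z.map κ (Z.map (inclExtend B B.fresh n) z), freshIncl B.fresh_notMem ≫ κ) := by
        rw [← types_comp_apply (Z.map _) (Z.map κ), ← Z.map_comp, inclExtend_extendDesc,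
          freshIncl_extendDesc, Z.map_id]; rfl
    _ = X.map (inclExtend B B.fresh n ≫ κ) (freshLift g hsq hp B z) := by
        rw [X.map_comp, types_comp_apply, map_freshLift]
        exact app_tensor_map f κ _ _
    _ = freshLift g hsq hp B z := by rw [inclExtend_extendDesc, X.map_id]; rfl

def freshLiftHom : Z ⟶ X where
  app B := TypeCat.ofHom (freshLift g hsq hp B)
  naturality _ _ σ := ConcreteCategory.hom_ext _ _ (freshLift_naturality g hsq hp σ)

end Converse

open TimeObj in
/-- Fresh clocks make every square against `y({l}, n)` a square of fibres along
`B ⟶ B.extend B.fresh n`. -/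
theorem BijectiveOnFibers.invariantUnderClockIntro {C : Type} [Infinite C] {Δ : Finset C}
    {X : TimeObj C ⥤ Type} {p : X ⟶ ClocksPow C Δ} (hp : BijectiveOnFibers p) :
    InvariantUnderClockIntro p := by
  classical
  intro l n Z f g hsq
  refine ⟨freshLiftHom g hsq hp, ⟨?_, ?_⟩, fun h ⟨hf, hg⟩ => ?_⟩
  · ext B ⟨z, w⟩
    exact (app_eq_freshLift g hsq hp z w).symm
  · ext B z
    exact app_freshLift g hsq hp B z
  · refine NatTrans.ext (funext fun B => ConcreteCategory.hom_ext _ _ fun z => ?_)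
    refine hp.eq_of_map_eq (isEmbedding_inclExtend B B.fresh n) ?_ ?_
    · exact (types_congr_hom (congrArg (fun φ => φ.app B) hg) z).trans
        (app_freshLift g hsq hp B z).symm
    · show X.map _ (h.app B z) = X.map _ (freshLift g hsq hp B z)
      rw [map_freshLift, ← types_comp_apply (h.app B) (X.map _), ← h.naturality]
      exact types_congr_hom (congrArg (fun φ => φ.app (B.extend B.fresh n)) hf)
        (Z.map (inclExtend B B.fresh n) z, freshIncl B.fresh_notMem)

namespace PObj

variable {C : Type} {Δ : Finset C}

/-- The element of `P(Δ)` recorded by `ρ`: which clocks of `Δ` it identifies and how many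
ticks they have left. -/
def induced (B : TimeObj C) (ρ : (ClocksPow C Δ).obj B) : PObj C Δ :=
  ⟨Setoid.ker ρ, fun a => B.d (ρ a), fun _ _ h => congrArg B.d h⟩

lemma induced_comp_le {B B' : TimeObj C} (σ : B ⟶ B') (ρ : (ClocksPow C Δ).obj B) :
    induced B' (σ.toFun ∘ ρ) ≤ induced B ρ :=
  ⟨fun _ _ h => congrArg σ.toFun h, fun a => TimeHom.le σ (ρ a)⟩

lemma le_induced_comp {B B' : TimeObj C} {σ : B ⟶ B'} (hσ : σ.IsEmbedding)
    (ρ : (ClocksPow C Δ).obj B) : induced B ρ ≤ induced B' (σ.toFun ∘ ρ) :=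
  ⟨fun _ _ h => hσ.injective h, fun a => (hσ.d_eq (ρ a)).ge⟩

def rep (u : PObj C Δ) (a : {k // k ∈ Δ}) : {k // k ∈ Δ} :=
  Quotient.out (Quotient.mk u.E a)

lemma rep_rel (u : PObj C Δ) (a : {k // k ∈ Δ}) : u.E.r (rep u a) a :=
  Quotient.exact (Quotient.out_eq (Quotient.mk u.E a))

lemma rep_eq_rep_iff (u : PObj C Δ) {a b : {k // k ∈ Δ}} : rep u a = rep u b ↔ u.E.r a b :=
  ⟨fun h => u.E.iseqv.trans (u.E.iseqv.symm (rep_rel u a)) (h ▸ rep_rel u b),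
    fun h => congrArg Quotient.out (Quotient.sound h)⟩

section Realize

variable [DecidableEq C]

lemma mem_of_mem_image_rep (u : PObj C Δ) {c : C}
    (hc : c ∈ Finset.image (fun a => (rep u a).1) Δ.attach) : c ∈ Δ := by
  obtain ⟨a, -, rfl⟩ := Finset.mem_image.mp hc
  exact (rep u a).2

/-- The classes of `u` as clocks, each named by its chosen representative. -/
def realize (u : PObj C Δ) : TimeObj C where
  E := Finset.image (fun a => (rep u a).1) Δ.attach
  d x := u.d ⟨x.1, mem_of_mem_image_rep u x.2⟩

def proj (u : PObj C Δ) : (ClocksPow C Δ).obj u.realize :=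
  fun a => ⟨(rep u a).1, Finset.mem_image_of_mem _ (Finset.mem_attach _ a)⟩

lemma proj_surjective (u : PObj C Δ) : Function.Surjective u.proj := by
  rintro ⟨c, hc⟩
  obtain ⟨a, -, ha⟩ := Finset.mem_image.mp (show c ∈ Finset.image _ Δ.attach from hc)
  exact ⟨a, Subtype.ext ha⟩

lemma d_proj (u : PObj C Δ) (a : {k // k ∈ Δ}) : u.realize.d (u.proj a) = u.d a :=
  u.resp _ _ (rep_rel u a)

lemma proj_eq_proj_iff (u : PObj C Δ) {a b : {k // k ∈ Δ}} : u.proj a = u.proj b ↔ u.E.r a b :=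
  ⟨fun h => (rep_eq_rep_iff u).mp (Subtype.ext (by injection h)),
    fun h => Subtype.ext (congrArg Subtype.val ((rep_eq_rep_iff u).mpr h) :)⟩

lemma induced_realize_le (u : PObj C Δ) : induced u.realize u.proj ≤ u :=
  ⟨fun _ _ h => (proj_eq_proj_iff u).mpr h, fun a => (d_proj u a).le⟩

lemma le_induced_realize (u : PObj C Δ) : u ≤ induced u.realize u.proj :=
  ⟨fun _ _ h => (proj_eq_proj_iff u).mp h, fun a => (d_proj u a).ge⟩

def realizeMap {u v : PObj C Δ} (h : u ≤ v) : v.realize ⟶ u.realize :=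
  ⟨fun x => u.proj ⟨x.1, mem_of_mem_image_rep v x.2⟩, fun x => by
    rw [d_proj]; exact h.2 _⟩

lemma realizeMap_proj {u v : PObj C Δ} (h : u ≤ v) : (realizeMap h).toFun ∘ v.proj = u.proj :=
  funext fun a => (proj_eq_proj_iff u).mpr (h.1 _ _ (rep_rel v a))

lemma realizeMap_proj_apply {u v : PObj C Δ} (h : u ≤ v) (a : {k // k ∈ Δ}) :
    (realizeMap h).toFun (v.proj a) = u.proj a :=
  congrFun (realizeMap_proj h) a

lemma realize_hom_ext {v : PObj C Δ} {B : TimeObj C} {σ τ : v.realize ⟶ B}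
    (h : σ.toFun ∘ v.proj = τ.toFun ∘ v.proj) : σ = τ :=
  TimeHom.ext' ((proj_surjective v).injective_comp_right h)

lemma realizeMap_self (u : PObj C Δ) : realizeMap (le_refl u) = 𝟙 u.realize :=
  realize_hom_ext (realizeMap_proj _)

lemma realizeMap_trans {u v w : PObj C Δ} (h : u ≤ v) (h' : v ≤ w) :
    realizeMap (h.trans h') = realizeMap h' ≫ realizeMap h :=
  realize_hom_ext (by
    show _ = (realizeMap h).toFun ∘ ((realizeMap h').toFun ∘ w.proj)
    rw [realizeMap_proj, realizeMap_proj, realizeMap_proj])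

def inducedHom (B : TimeObj C) (ρ : (ClocksPow C Δ).obj B) : (induced B ρ).realize ⟶ B :=
  ⟨fun x => ρ ⟨x.1, mem_of_mem_image_rep (induced B ρ) x.2⟩, fun _ => le_rfl⟩

lemma inducedHom_proj (B : TimeObj C) (ρ : (ClocksPow C Δ).obj B) :
    (inducedHom B ρ).toFun ∘ (induced B ρ).proj = ρ :=
  funext (rep_rel (induced B ρ))

lemma inducedHom_proj_apply (B : TimeObj C) (ρ : (ClocksPow C Δ).obj B) (a : {k // k ∈ Δ}) :
    (inducedHom B ρ).toFun ((induced B ρ).proj a) = ρ a :=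
  congrFun (inducedHom_proj B ρ) a

lemma isEmbedding_inducedHom (B : TimeObj C) (ρ : (ClocksPow C Δ).obj B) :
    (inducedHom B ρ).IsEmbedding := by
  refine ⟨fun x x' h => ?_, fun _ => rfl⟩
  obtain ⟨a, rfl⟩ := proj_surjective _ x
  obtain ⟨a', rfl⟩ := proj_surjective _ x'
  exact (proj_eq_proj_iff _).mpr ((congrFun (inducedHom_proj B ρ) a).symm.trans
    (h.trans (congrFun (inducedHom_proj B ρ) a')))

end Realize

section Restrict

variable (Y : (PObj C Δ)ᵒᵖ ⥤ Type)

def restrict {u v : PObj C Δ} (h : u ≤ v) : Y.obj (op v) → Y.obj (op u) :=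
  Y.map (homOfLE h).op

@[simp] lemma restrict_restrict {u v w : PObj C Δ} (h : u ≤ v) (h' : v ≤ w) (y : Y.obj (op w)) :
    restrict Y h (restrict Y h' y) = restrict Y (h.trans h') y :=
  (types_congr_hom (Y.map_comp (homOfLE h').op (homOfLE h).op) y).symm

@[simp] lemma restrict_self {u : PObj C Δ} (h : u ≤ u) (y : Y.obj (op u)) : restrict Y h y = y :=
  types_congr_hom (Y.map_id (op u)) y

lemma restrict_naturality {Y' : (PObj C Δ)ᵒᵖ ⥤ Type} (β : Y ⟶ Y') {u v : PObj C Δ} (h : u ≤ v)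
    (y : Y.obj (op v)) : β.app (op u) (restrict Y h y) = restrict Y' h (β.app (op v) y) :=
  types_congr_hom (β.naturality (homOfLE h).op) y

end Restrict

end PObj

section TotalSpace

open PObj

variable {C : Type} {Δ : Finset C} (Y : (PObj C Δ)ᵒᵖ ⥤ Type)

def totalSpace : TimeObj C ⥤ Type where
  obj B := Σ ρ : (ClocksPow C Δ).obj B, Y.obj (op (induced B ρ))
  map σ := TypeCat.ofHom fun s => ⟨σ.toFun ∘ s.1, restrict Y (induced_comp_le σ s.1) s.2⟩
  map_id _ := ConcreteCategory.hom_ext _ _ fun s =>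
    congrArg (Sigma.mk s.1) (restrict_self Y _ s.2)
  map_comp σ τ := ConcreteCategory.hom_ext _ _ fun s =>
    congrArg (Sigma.mk ((σ ≫ τ).toFun ∘ s.1)) (restrict_restrict Y _ _ s.2).symm

def totalSpaceProj : totalSpace Y ⟶ ClocksPow C Δ where
  app _ := TypeCat.ofHom Sigma.fst

variable {Y} in
def totalSpaceMap {Y' : (PObj C Δ)ᵒᵖ ⥤ Type} (β : Y ⟶ Y') : totalSpace Y ⟶ totalSpace Y' where
  app _ := TypeCat.ofHom fun s => ⟨s.1, β.app _ s.2⟩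
  naturality _ _ σ := ConcreteCategory.hom_ext _ _ fun s =>
    congrArg (Sigma.mk (σ.toFun ∘ s.1)) (restrict_naturality Y β (induced_comp_le σ s.1) s.2)

lemma bijectiveOnFibers_totalSpaceProj : BijectiveOnFibers (totalSpaceProj Y) := by
  intro A B σ hσ r
  constructor
  · rintro ⟨⟨ρ, y⟩, rfl⟩ ⟨⟨ρ', y'⟩, hρ'⟩ h
    obtain rfl : ρ' = ρ := hρ'
    have hy : restrict Y (induced_comp_le σ _) y = restrict Y (induced_comp_le σ _) y' :=
      eq_of_heq (Sigma.mk.inj (congrArg Subtype.val h)).2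
    have := congrArg (restrict Y (le_induced_comp hσ _)) hy
    rw [restrict_restrict, restrict_restrict, restrict_self, restrict_self] at this
    subst this; rfl
  · rintro ⟨⟨ρ', y'⟩, hρ'⟩
    obtain rfl : ρ' = σ.toFun ∘ r := hρ'
    refine ⟨⟨⟨r, restrict Y (le_induced_comp hσ r) y'⟩, rfl⟩, ?_⟩
    exact Subtype.ext (congrArg (Sigma.mk _) ((restrict_restrict Y _ _ y').trans
      (restrict_self Y _ y')))

end TotalSpace

section FiberComponent

open PObj

variable {C : Type} {Δ : Finset C} {Y Y' : (PObj C Δ)ᵒᵖ ⥤ Type}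

lemma totalSpace.eq_mk {B : TimeObj C} {ρ : (ClocksPow C Δ).obj B} (s : (totalSpace Y).obj B)
    (h : s.1 = ρ) : s = ⟨ρ, restrict Y (congrArg (induced B) h).ge s.2⟩ := by
  obtain ⟨ρ, y⟩ := s
  subst h
  rw [restrict_self]

variable (φ : totalSpace Y ⟶ totalSpace Y') (hφ : φ ≫ totalSpaceProj Y' = totalSpaceProj Y)
include hφ

lemma totalSpace_fst_app {B : TimeObj C} (s : (totalSpace Y).obj B) : (φ.app B s).1 = s.1 :=
  types_congr_hom (congrArg (fun ψ => ψ.app B) hφ) s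

def fiberComponent {B : TimeObj C} (ρ : (ClocksPow C Δ).obj B) (y : Y.obj (op (induced B ρ))) :
    Y'.obj (op (induced B ρ)) :=
  restrict Y' (congrArg (induced B) (totalSpace_fst_app φ hφ ⟨ρ, y⟩)).ge (φ.app B ⟨ρ, y⟩).2

lemma totalSpace_app_mk {B : TimeObj C} (ρ : (ClocksPow C Δ).obj B) (y : Y.obj (op (induced B ρ))) :
    φ.app B ⟨ρ, y⟩ = ⟨ρ, fiberComponent φ hφ ρ y⟩ :=
  totalSpace.eq_mk _ (totalSpace_fst_app φ hφ _)

lemma fiberComponent_restrict {B B' : TimeObj C} (σ : B ⟶ B') {ρ : (ClocksPow C Δ).obj B}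
    {ρ' : (ClocksPow C Δ).obj B'} (hρ : σ.toFun ∘ ρ = ρ') (hle : induced B' ρ' ≤ induced B ρ)
    (y : Y.obj (op (induced B ρ))) :
    fiberComponent φ hφ ρ' (restrict Y hle y) = restrict Y' hle (fiberComponent φ hφ ρ y) := by
  subst hρ
  have h : φ.app B' ((totalSpace Y).map σ ⟨ρ, y⟩) = (totalSpace Y').map σ (φ.app B ⟨ρ, y⟩) :=
    types_congr_hom (φ.naturality σ) ⟨ρ, y⟩
  rw [totalSpace_app_mk φ hφ ρ y] at h
  change φ.app B' ⟨σ.toFun ∘ ρ, restrict Y hle y⟩ =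
    ⟨σ.toFun ∘ ρ, restrict Y' hle (fiberComponent φ hφ ρ y)⟩ at h
  exact eq_of_heq (Sigma.mk.inj ((totalSpace_app_mk φ hφ _ _).symm.trans h)).2

omit hφ in
lemma fiberComponent_totalSpaceMap (β : Y ⟶ Y') {B : TimeObj C} (ρ : (ClocksPow C Δ).obj B)
    (y : Y.obj (op (induced B ρ))) : fiberComponent (totalSpaceMap β) rfl ρ y = β.app _ y :=
  restrict_self Y' _ _

variable [DecidableEq C]

def ofTotalSpaceHom : Y ⟶ Y' where
  app u := TypeCat.ofHom fun y => restrict Y' (le_induced_realize u.unop)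
    (fiberComponent φ hφ u.unop.proj (restrict Y (induced_realize_le u.unop) y))
  naturality u v h := ConcreteCategory.hom_ext _ _ fun y => by
    have hle := leOfHom h.unop
    have hR : induced v.unop.realize v.unop.proj ≤ induced u.unop.realize u.unop.proj :=
      (induced_realize_le _).trans (hle.trans (le_induced_realize _))
    change restrict Y' _ (fiberComponent φ hφ _ (restrict Y _ (restrict Y hle y))) =
      restrict Y' hle (restrict Y' _ (fiberComponent φ hφ _ (restrict Y _ y)))
    rw [restrict_restrict, restrict_restrict,
      ← restrict_restrict Y hR (induced_realize_le _),
      fiberComponent_restrict φ hφ (realizeMap hle) (realizeMap_proj hle) hR, restrict_restrict]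

lemma totalSpaceMap_ofTotalSpaceHom : totalSpaceMap (ofTotalSpaceHom φ hφ) = φ := by
  refine NatTrans.ext (funext fun B => ConcreteCategory.hom_ext _ _ fun ⟨ρ, y⟩ => ?_)
  rw [totalSpace_app_mk φ hφ]
  refine congrArg (Sigma.mk ρ) ?_
  change restrict Y' _ (fiberComponent φ hφ _ (restrict Y _ y)) = _
  conv_rhs => rw [← restrict_self Y (le_refl _) y,
    ← restrict_restrict Y (le_induced_realize _) (induced_realize_le _)]
  rw [fiberComponent_restrict φ hφ (inducedHom B ρ) (inducedHom_proj B ρ)]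

omit hφ in
lemma ofTotalSpaceHom_totalSpaceMap (β : Y ⟶ Y') : ofTotalSpaceHom (totalSpaceMap β) rfl = β := by
  refine NatTrans.ext (funext fun u => ConcreteCategory.hom_ext _ _ fun y => ?_)
  change restrict Y' _ (fiberComponent _ rfl _ (restrict Y _ y)) = β.app u y
  rw [fiberComponent_totalSpaceMap, ← restrict_naturality, restrict_restrict, restrict_self]

end FiberComponent

section FiberPresheaf

open PObj

variable {C : Type} [DecidableEq C] {Δ : Finset C} {X : TimeObj C ⥤ Type}
  (p : X ⟶ ClocksPow C Δ)

def fiberPresheaf : (PObj C Δ)ᵒᵖ ⥤ Type where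
  obj u := {x : X.obj u.unop.realize // p.app _ x = u.unop.proj}
  map h := TypeCat.ofHom fun x => ⟨X.map (realizeMap (leOfHom h.unop)) x.1, by
    rw [app_map_eq_comp, x.2, realizeMap_proj]⟩
  map_id u := ConcreteCategory.hom_ext _ _ fun x => Subtype.ext <|
    (congrArg (fun σ => X.map σ x.1) (realizeMap_self u.unop)).trans
      (types_congr_hom (X.map_id _) x.1)
  map_comp h h' := ConcreteCategory.hom_ext _ _ fun x => Subtype.ext <|
    (congrArg (fun σ => X.map σ x.1) (realizeMap_trans (leOfHom h'.unop) (leOfHom h.unop))).trans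
      (types_congr_hom (X.map_comp _ _) x.1)

lemma realizeMap_comp_inducedHom {B B' : TimeObj C} (σ : B ⟶ B') (ρ : (ClocksPow C Δ).obj B) :
    realizeMap (induced_comp_le σ ρ) ≫ inducedHom B' (σ.toFun ∘ ρ) = inducedHom B ρ ≫ σ := by
  apply realize_hom_ext
  funext a
  change (inducedHom B' (σ.toFun ∘ ρ)).toFun
      ((realizeMap (induced_comp_le σ ρ)).toFun ((induced B ρ).proj a)) =
    σ.toFun ((inducedHom B ρ).toFun ((induced B ρ).proj a))
  rw [realizeMap_proj_apply, inducedHom_proj_apply]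
  exact inducedHom_proj_apply B' (σ.toFun ∘ ρ) a

def fiberPresheafCounit : totalSpace (fiberPresheaf p) ⟶ X where
  app B := TypeCat.ofHom fun s => X.map (inducedHom B s.1) s.2.1
  naturality B B' σ := ConcreteCategory.hom_ext _ _ fun ⟨ρ, x⟩ => by
    change X.map (inducedHom B' (σ.toFun ∘ ρ)) (X.map (realizeMap (induced_comp_le σ ρ)) x.1) =
      X.map σ (X.map (inducedHom B ρ) x.1)
    rw [← types_comp_apply (X.map _) (X.map _), ← X.map_comp,
      ← types_comp_apply (X.map _) (X.map σ), ← X.map_comp, realizeMap_comp_inducedHom]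

lemma fiberPresheafCounit_comp : fiberPresheafCounit p ≫ p = totalSpaceProj _ := by
  refine NatTrans.ext (funext fun B => ConcreteCategory.hom_ext _ _ fun s => ?_)
  change p.app B (X.map (inducedHom B s.1) s.2.1) = s.1
  rw [app_map_eq_comp, s.2.2, inducedHom_proj]

lemma fiberPresheafCounit_app_bijective (hp : BijectiveOnFibers p) (B : TimeObj C) :
    Function.Bijective ((fiberPresheafCounit p).app B) := by
  have hfst (s : (totalSpace (fiberPresheaf p)).obj B) :
      p.app B ((fiberPresheafCounit p).app B s) = s.1 :=
    types_congr_hom (congrArg (fun φ => φ.app B) (fiberPresheafCounit_comp p)) s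
  constructor
  · rintro ⟨ρ, x⟩ ⟨ρ', x'⟩ h
    obtain rfl : ρ = ρ' := (hfst _).symm.trans ((congrArg _ h).trans (hfst _))
    obtain rfl : x = x' :=
      Subtype.ext (hp.eq_of_map_eq (isEmbedding_inducedHom B ρ) (x.2.trans x'.2.symm) h)
    rfl
  · intro z
    have hσ := isEmbedding_inducedHom B (p.app B z)
    have hz := (inducedHom_proj B (p.app B z)).symm
    exact ⟨⟨p.app B z, hp.lift hσ _ z hz, hp.app_lift hσ _ z hz⟩, hp.map_lift hσ _ z hz⟩

def fiberPresheafCounitIso (hp : BijectiveOnFibers p) : totalSpace (fiberPresheaf p) ≅ X :=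
  NatIso.ofComponents
    (fun B => (Equiv.ofBijective _ (fiberPresheafCounit_app_bijective p hp B)).toIso)
    fun σ => (fiberPresheafCounit p).naturality σ

end FiberPresheaf

section Equivalence

variable {C : Type} [Infinite C] {Δ : Finset C}

def totalSpaceFunctor : ((PObj C Δ)ᵒᵖ ⥤ Type) ⥤
    ObjectProperty.FullSubcategory fun X : Over (ClocksPow C Δ) =>
      InvariantUnderClockIntro X.hom where
  obj Y := ⟨Over.mk (totalSpaceProj Y),
    (bijectiveOnFibers_totalSpaceProj Y).invariantUnderClockIntro⟩
  map β := ObjectProperty.homMk (Over.homMk (totalSpaceMap β))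

variable [DecidableEq C]

def totalSpaceFunctor.fullyFaithful : (totalSpaceFunctor (C := C) (Δ := Δ)).FullyFaithful where
  preimage α := ofTotalSpaceHom α.hom.left (Over.w α.hom)
  map_preimage _ := ObjectProperty.hom_ext _ (Over.OverMorphism.ext
    (totalSpaceMap_ofTotalSpaceHom _ _))
  preimage_map β := ofTotalSpaceHom_totalSpaceMap β

instance : (totalSpaceFunctor (C := C) (Δ := Δ)).IsEquivalence where
  full := totalSpaceFunctor.fullyFaithful.full
  faithful := totalSpaceFunctor.fullyFaithful.faithful
  essSurj.mem_essImage X := by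
    have hp := InvariantUnderClockIntro.bijectiveOnFibers X.property
    exact ⟨fiberPresheaf X.obj.hom, ⟨ObjectProperty.isoMk _
      (Over.isoMk (fiberPresheafCounitIso X.obj.hom hp) (fiberPresheafCounit_comp X.obj.hom))⟩⟩

end Equivalence

theorem statement_16_general (C : Type) [Infinite C] (Δ : Finset C) :
    Nonempty
      ((ObjectProperty.FullSubcategory fun X : Over (ClocksPow C Δ) => InvariantUnderClockIntro X.hom)
        ≌ ((PObj C Δ)ᵒᵖ ⥤ Type)) := by
  classical
  exact ⟨totalSpaceFunctor.asEquivalence.symm⟩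

/-- The full subcategory of `Set^𝕋/𝒞^Δ` on objects whose structure map is invariant
under clock introduction is equivalent to `GR(Δ)`, the category of presheaves on the
poset `P(Δ)`. -/
theorem statement_16 (C : Type) [Countable C] [Infinite C] (Δ : Finset C) :
    Nonempty
      ((ObjectProperty.FullSubcategory fun X : Over (ClocksPow C Δ) => InvariantUnderClockIntro X.hom)
        ≌ ((PObj C Δ)ᵒᵖ ⥤ Type)) :=
  statement_16_general C Δ
end
end
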